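/- If G and H are connected vertex-transitive graphs, each with at least two vertices, and diam(G) + diam(H) ≤ χρ(G), then the Cartesian product G □ H is χρ-critical. -/

import Mathlib

open SimpleGraph

/-- A packing coloring of `G` with colors `1,…,k`: vertices with the same
color `i` are pairwise at (shortest-path) distance greater than `i`. -/
def IsPackingColoring {V : Type*} (G : SimpleGraph V) (k : ℕ) (c : V → ℕ) : Prop :=
  (∀ v, c v ∈ Finset.Icc 1 k) ∧
    ∀ u v : V, u ≠ v → c u = c v → (c u : ℕ∞) < G.edist u v

/-- The packing chromatic number `χρ(G)`. -/
noncomputable def packingChromatic {V : Type*} (G : SimpleGraph V) : ℕ :=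
  sInf {k | ∃ c : V → ℕ, IsPackingColoring G k c}

/-- The vertex-deleted subgraph `G - x`. -/
abbrev deleteVert {V : Type*} (G : SimpleGraph V) (x : V) : SimpleGraph {v : V // v ≠ x} :=
  G.induce {v : V | v ≠ x}

section Aux

variable {V W U : Type*}

/-- Graph homomorphisms do not increase the extended distance. -/
lemma hom_edist_le' {G : SimpleGraph V} {G' : SimpleGraph W} (f : G →g G') (u v : V) :
    G'.edist (f u) (f v) ≤ G.edist u v := by
  rcases eq_or_ne (G.edist u v) ⊤ with h | h
  · simp [h]
  · obtain ⟨p, hp⟩ := G.exists_walk_of_edist_ne_top h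
    calc G'.edist (f u) (f v) ≤ (p.map f).length := edist_le _
    _ = p.length := by rw [Walk.length_map]
    _ = G.edist u v := hp

lemma packing_nonempty' (G : SimpleGraph V) [Fintype V] :
    ∃ c : V → ℕ, IsPackingColoring G (Fintype.card V) c := by
  refine ⟨fun v => (Fintype.equivFin V v).1 + 1, fun v => ?_, fun u v huv hc => ?_⟩
  · simp only [Finset.mem_Icc]
    exact ⟨Nat.le_add_left _ _, (Fintype.equivFin V v).2⟩
  · dsimp only at hc
    exact absurd ((Fintype.equivFin V).injective (Fin.ext (by omega))) huv

lemma packingChromatic_le' {G : SimpleGraph V} {k : ℕ} {c : V → ℕ}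
    (h : IsPackingColoring G k c) : packingChromatic G ≤ k :=
  Nat.sInf_le ⟨c, h⟩

lemma packingChromatic_spec' (G : SimpleGraph V) [Fintype V] :
    ∃ c : V → ℕ, IsPackingColoring G (packingChromatic G) c :=
  Nat.sInf_mem (⟨_, packing_nonempty' G⟩ : {k | ∃ c : V → ℕ, IsPackingColoring G k c}.Nonempty)

/-- A packing coloring can be pulled back along an injective homomorphism. -/
lemma isPackingColoring_comp' {G : SimpleGraph V} {G' : SimpleGraph W} (f : G →g G')
    (hf : Function.Injective f) {k : ℕ} {c : W → ℕ} (h : IsPackingColoring G' k c) :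
    IsPackingColoring G k (c ∘ f) :=
  ⟨fun v => h.1 _, fun u v huv hc =>
    lt_of_lt_of_le (h.2 (f u) (f v) (fun e => huv (hf e)) hc) (hom_edist_le' f u v)⟩

/-- The packing chromatic number is invariant under isomorphism. -/
lemma packingChromatic_iso' {G : SimpleGraph V} {G' : SimpleGraph W} (φ : G ≃g G') :
    packingChromatic G = packingChromatic G' := by
  unfold packingChromatic
  congr 1
  ext k
  constructor
  · rintro ⟨c, hc⟩
    exact ⟨c ∘ φ.symm, isPackingColoring_comp' φ.symm.toHom φ.symm.toEquiv.injective hc⟩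
  · rintro ⟨c, hc⟩
    exact ⟨c ∘ φ, isPackingColoring_comp' φ.toHom φ.toEquiv.injective hc⟩

lemma ediam_ne_top' {G : SimpleGraph V} [Fintype V] [Nonempty V] (hc : G.Connected) :
    G.ediam ≠ ⊤ := by
  obtain ⟨u, v, huv⟩ := G.exists_edist_eq_ediam_of_finite
  rw [← huv]
  exact edist_ne_top_iff_reachable.mpr (hc u v)

lemma edist_le_diam' {G : SimpleGraph V} [Fintype V] (hc : G.Connected) (u v : V) :
    G.edist u v ≤ (G.diam : ℕ∞) := by
  have : Nonempty V := ⟨u⟩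
  rw [SimpleGraph.diam, ENat.coe_toNat (ediam_ne_top' hc)]
  exact edist_le_ediam

lemma one_le_diam' {G : SimpleGraph V} [Fintype V] (hc : G.Connected)
    (hV : 2 ≤ Fintype.card V) : 1 ≤ G.diam := by
  have : Nontrivial V := Fintype.one_lt_card_iff_nontrivial.mp hV
  have h1 : G.ediam ≠ 0 := ediam_ne_zero
  have h2 : G.ediam ≠ ⊤ := ediam_ne_top' hc
  rw [Nat.one_le_iff_ne_zero, ne_eq, SimpleGraph.diam, ENat.toNat_eq_zero]
  tauto

lemma boxProd_edist_le' {G : SimpleGraph V} {H : SimpleGraph W} (g g' : V) (h h' : W) :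
    (G □ H).edist (g, h) (g', h') ≤ G.edist g g' + H.edist h h' := by
  calc (G □ H).edist (g, h) (g', h')
      ≤ (G □ H).edist (g, h) (g', h) + (G □ H).edist (g', h) (g', h') :=
        SimpleGraph.edist_triangle
    _ ≤ G.edist g g' + H.edist h h' := by
        gcongr
        · exact hom_edist_le' (G.boxProdLeft H h).toHom g g'
        · exact hom_edist_le' (G.boxProdRight H g').toHom h h'

lemma boxProd_edist_le_diam' {G : SimpleGraph V} {H : SimpleGraph W} [Fintype V] [Fintype W]
    (hGc : G.Connected) (hHc : H.Connected) (u v : V × W) :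
    (G □ H).edist u v ≤ ((G.diam + H.diam : ℕ) : ℕ∞) := by
  obtain ⟨g, h⟩ := u
  obtain ⟨g', h'⟩ := v
  calc (G □ H).edist (g, h) (g', h') ≤ G.edist g g' + H.edist h h' :=
        boxProd_edist_le' g g' h h'
    _ ≤ (G.diam : ℕ∞) + (H.diam : ℕ∞) :=
        add_le_add (edist_le_diam' hGc g g') (edist_le_diam' hHc h h')
    _ = ((G.diam + H.diam : ℕ) : ℕ∞) := by push_cast; ring

/-- Product of two graph automorphisms on the box product. -/
def boxProdIso' {G : SimpleGraph V} {H : SimpleGraph W} (φ : G ≃g G) (ψ : H ≃g H) :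
    (G □ H) ≃g (G □ H) where
  toEquiv := Equiv.prodCongr φ.toEquiv ψ.toEquiv
  map_rel_iff' := by
    rintro ⟨a₁, b₁⟩ ⟨a₂, b₂⟩
    have h1 : ∀ a b : V, G.Adj (φ.toEquiv a) (φ.toEquiv b) ↔ G.Adj a b := fun a b => φ.map_adj_iff
    have h2 : ∀ a b : W, H.Adj (ψ.toEquiv a) (ψ.toEquiv b) ↔ H.Adj a b := fun a b => ψ.map_adj_iff
    simp only [Equiv.prodCongr_apply, Prod.map, boxProd_adj, h1, h2,
      Equiv.apply_eq_iff_eq]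

/-- An automorphism carrying `x` to `y` induces an iso of vertex-deleted graphs. -/
def deleteVertIso' {Γ : SimpleGraph U} (θ : Γ ≃g Γ) (x y : U) (hxy : θ x = y) :
    deleteVert Γ x ≃g deleteVert Γ y where
  toEquiv := θ.toEquiv.subtypeEquiv (fun v => by
    rw [← hxy]
    constructor
    · exact fun hv he => hv (θ.toEquiv.injective he)
    · exact fun hv he => hv (by rw [he]; rfl))
  map_rel_iff' := by
    rintro ⟨a, ha⟩ ⟨b, hb⟩
    simp only [Equiv.subtypeEquiv_apply, comap_adj, Function.Embedding.coe_subtype]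
    exact θ.map_adj_iff

/-- The inclusion hom of the vertex-deleted subgraph. -/
def deleteVertHom' (Γ : SimpleGraph U) (x : U) : deleteVert Γ x →g Γ where
  toFun := Subtype.val
  map_rel' := fun h => h

/-- The key counting lemma: any packing coloring of `G □ H` uses strictly more than
`χρ(G)` colors. -/
lemma key_lemma' {G : SimpleGraph V} {H : SimpleGraph W} [Fintype V] [Fintype W]
    (hGc : G.Connected) (hHc : H.Connected)
    (hV : 2 ≤ Fintype.card V) (hW : 2 ≤ Fintype.card W)
    (hd : G.diam + H.diam ≤ packingChromatic G)
    {k : ℕ} {c : V × W → ℕ} (hc : IsPackingColoring (G □ H) k c) :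
    packingChromatic G < k := by
  classical
  set dG := G.diam with hdG
  set dH := H.diam with hdH
  set d := dG + dH with hdd
  have hdG1 : 1 ≤ dG := one_le_diam' hGc hV
  have hdH1 : 1 ≤ dH := one_le_diam' hHc hW
  have : Nontrivial W := Fintype.one_lt_card_iff_nontrivial.mp hW
  have hlayer : ∀ h : W, IsPackingColoring G k (fun g => c (g, h)) := fun h =>
    isPackingColoring_comp' (G.boxProdLeft H h).toHom (G.boxProdLeft H h).injective hc
  have hk : packingChromatic G ≤ k := packingChromatic_le' (hlayer (Classical.arbitrary W))
  have hdk : d ≤ k := le_trans hd hk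
  have hPd : ∀ u v : V × W, (G □ H).edist u v ≤ (d : ℕ∞) :=
    boxProd_edist_le_diam' hGc hHc
  set M : W → Finset ℕ := fun h => (Finset.Icc d k).filter (fun i => ∃ g, c (g, h) = i) with hM
  have hMdisj : ∀ h h' : W, h ≠ h' → Disjoint (M h) (M h') := by
    intro h h' hne
    rw [Finset.disjoint_left]
    intro i hi hi'
    simp only [hM, Finset.mem_filter, Finset.mem_Icc] at hi hi'
    obtain ⟨⟨hdi, _⟩, g, hg⟩ := hi
    obtain ⟨_, g', hg'⟩ := hi'
    have hne2 : (g, h) ≠ (g', h') := by simp [hne]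
    have := hc.2 _ _ hne2 (by rw [hg, hg'])
    rw [hg] at this
    have h2 := lt_of_lt_of_le this (hPd (g, h) (g', h'))
    exact absurd (Nat.cast_lt.mp h2) (not_lt.mpr hdi)
  obtain ⟨h1, h2, hh12⟩ := exists_pair_ne W
  have hcard2 : (M h1).card + (M h2).card ≤ k - d + 1 := by
    have hsub : M h1 ∪ M h2 ⊆ Finset.Icc d k := Finset.union_subset
      (Finset.filter_subset _ _) (Finset.filter_subset _ _)
    have := Finset.card_le_card hsub
    rw [Finset.card_union_of_disjoint (hMdisj h1 h2 hh12)] at this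
    rw [Nat.card_Icc] at this
    omega
  obtain ⟨h, hm⟩ : ∃ h : W, (M h).card ≤ k - d := by
    by_cases h1le : (M h1).card ≤ k - d
    · exact ⟨h1, h1le⟩
    · exact ⟨h2, by omega⟩
  set S : Finset V := Finset.univ.filter (fun g => dG ≤ c (g, h)) with hS
  have hinj : Set.InjOn (fun g => c (g, h)) S := by
    intro g hg g' hg' he
    by_contra hne
    have hne2 : ((g, h) : V × W) ≠ (g', h) := by simp [hne]
    have h1 := hc.2 _ _ hne2 he
    have hle : (G □ H).edist (g, h) (g', h) ≤ (dG : ℕ∞) :=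
      le_trans (hom_edist_le' (G.boxProdLeft H h).toHom g g') (edist_le_diam' hGc g g')
    have h2 := lt_of_lt_of_le h1 hle
    have h3 := Nat.cast_lt.mp h2
    simp only [hS, Finset.mem_coe, Finset.mem_filter] at hg
    omega
  have himg : S.image (fun g => c (g, h)) ⊆ Finset.Icc dG (d - 1) ∪ M h := by
    intro i hi
    simp only [Finset.mem_image] at hi
    obtain ⟨g, hg, hgi⟩ := hi
    simp only [hS, Finset.mem_filter] at hg
    have hik : i ≤ k := by
      have := hc.1 (g, h); rw [hgi] at this
      exact (Finset.mem_Icc.mp this).2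
    rcases lt_or_ge i d with hid | hid
    · exact Finset.mem_union_left _ (Finset.mem_Icc.mpr ⟨hgi ▸ hg.2, by omega⟩)
    · exact Finset.mem_union_right _ (by
        simp only [hM, Finset.mem_filter, Finset.mem_Icc]
        exact ⟨⟨hid, hik⟩, g, hgi⟩)
  have hScard : S.card ≤ k - dG := by
    have h1 := Finset.card_image_of_injOn hinj
    have h2 := Finset.card_le_card himg
    have h3 := Finset.card_union_le (Finset.Icc dG (d - 1)) (M h)
    rw [Nat.card_Icc] at h3
    omega
  set c'' : V → ℕ := fun g =>
    if hg : g ∈ S then dG + (S.equivFin ⟨g, hg⟩ : ℕ) else c (g, h) with hc''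
  have hpack : IsPackingColoring G (k - 1) c'' := by
    constructor
    · intro v
      simp only [hc'']
      split
      · rename_i hv
        have := (S.equivFin ⟨v, hv⟩).2
        simp only [Finset.mem_Icc]
        omega
      · rename_i hv
        simp only [hS, Finset.mem_filter, Finset.mem_univ, true_and, not_le] at hv
        have := hc.1 (v, h)
        simp only [Finset.mem_Icc] at this ⊢
        omega
    · intro u v huv he
      simp only [hc''] at he ⊢
      split at he <;> split at he
      · rename_i hu hv
        have heq : (S.equivFin ⟨u, hu⟩ : Fin S.card) = S.equivFin ⟨v, hv⟩ :=
          Fin.ext (by omega)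
        have := S.equivFin.injective heq
        exact absurd (congrArg Subtype.val this) huv
      · rename_i hu hv
        simp only [hS, Finset.mem_filter, Finset.mem_univ, true_and, not_le] at hv
        omega
      · rename_i hu hv
        simp only [hS, Finset.mem_filter, Finset.mem_univ, true_and, not_le] at hu
        omega
      · rename_i hu hv
        have hne2 : ((u, h) : V × W) ≠ (v, h) := by simp [huv]
        have hlt := hc.2 _ _ hne2 he
        rw [dif_neg hu]
        exact lt_of_lt_of_le hlt (hom_edist_le' (G.boxProdLeft H h).toHom u v)
  have := packingChromatic_le' hpack
  omega

end Aux

/-- If `G` and `H` are connected vertex-transitive graphs on at least two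
vertices and `diam(G) + diam(H) ≤ χρ(G)`, then `G □ H` is `χρ`-critical. -/
theorem stmt_19 {V W : Type*} [Fintype V] [Fintype W]
    (G : SimpleGraph V) (H : SimpleGraph W)
    (hGc : G.Connected) (hHc : H.Connected)
    (hV : 2 ≤ Fintype.card V) (hW : 2 ≤ Fintype.card W)
    (hGvt : ∀ u v : V, ∃ φ : G ≃g G, φ u = v)
    (hHvt : ∀ u v : W, ∃ φ : H ≃g H, φ u = v)
    (hd : G.diam + H.diam ≤ packingChromatic G) :
    ∀ x : V × W,
      packingChromatic (deleteVert (G □ H) x) < packingChromatic (G □ H) := by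
  classical
  intro x
  set d := G.diam + H.diam with hdd
  set k := packingChromatic (G □ H) with hk
  obtain ⟨c, hc⟩ := packingChromatic_spec' (G □ H)
  have hGlt : packingChromatic G < k := key_lemma' hGc hHc hV hW hd hc
  have hdk : d < k := lt_of_le_of_lt hd hGlt
  have hPd : ∀ u v : V × W, (G □ H).edist u v ≤ (d : ℕ∞) :=
    boxProd_edist_le_diam' hGc hHc
  -- some vertex receives color k
  have hex : ∃ y, c y = k := by
    by_contra hno
    push_neg at hno
    have hpack : IsPackingColoring (G □ H) (k - 1) c := by
      refine ⟨fun v => ?_, hc.2⟩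
      have h1 := hc.1 v
      have h2 := hno v
      simp only [Finset.mem_Icc] at h1 ⊢
      omega
    have := packingChromatic_le' hpack
    omega
  obtain ⟨y, hy⟩ := hex
  -- and it is the only one
  have huniq : ∀ z, c z = k → z = y := by
    intro z hz
    by_contra hzy
    have h1 := hc.2 z y hzy (hz.trans hy.symm)
    have h2 := lt_of_lt_of_le h1 (hPd z y)
    rw [hz] at h2
    exact absurd (Nat.cast_lt.mp h2) (not_lt.mpr (le_of_lt hdk))
  -- the restriction to `G □ H - y` is a packing coloring with k - 1 colors
  have hrest : IsPackingColoring (deleteVert (G □ H) y) (k - 1) (fun v => c v.val) := by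
    constructor
    · intro v
      have h1 := hc.1 v.val
      have h2 : c v.val ≠ k := fun he => v.2 (huniq _ he)
      simp only [Finset.mem_Icc] at h1 ⊢
      omega
    · intro u v huv he
      have hne : u.val ≠ v.val := fun h => huv (Subtype.ext h)
      exact lt_of_lt_of_le (hc.2 _ _ hne he)
        (hom_edist_le' (deleteVertHom' (G □ H) y) u v)
  have hy' : packingChromatic (deleteVert (G □ H) y) ≤ k - 1 := packingChromatic_le' hrest
  -- transfer to `x` by vertex-transitivity
  obtain ⟨φ, hφ⟩ := hGvt x.1 y.1
  obtain ⟨ψ, hψ⟩ := hHvt x.2 y.2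
  have hθ : (boxProdIso' φ ψ) x = y := by
    show (φ x.1, ψ x.2) = y
    rw [hφ, hψ]
  have heq := packingChromatic_iso' (deleteVertIso' (boxProdIso' φ ψ) x y hθ)
  omega
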